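/- arXiv:math/0205206 — 5 statements merged into one kernel-verified Lean document; each statement's English description precedes it below -/
import Mathlib

section
/- For all n ≥ 3, every permutation π of {1,...,n} avoiding the patterns 132, 2341, and 3241 satisfies π⁻¹(n) = 1, π⁻¹(n) = 2, or π⁻¹(n) = n; i.e., the maximum value n occurs in the first, second, or last position. -/
/-- A function `π : Fin n → Fin n` contains the pattern `p : Fin k → ℕ` if there is a
strictly increasing choice of indices whose images under `π` have the same pairwise
order relations as the entries of `p`. -/
def Contains {n k : ℕ} (π : Fin n → Fin n) (p : Fin k → ℕ) : Prop :=
  ∃ f : Fin k → Fin n, StrictMono f ∧ ∀ i j, p i < p j ↔ π (f i) < π (f j)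

/-- `π` avoids the pattern `p`. -/
def Avoids {n k : ℕ} (π : Fin n → Fin n) (p : Fin k → ℕ) : Prop := ¬ Contains π p

/-- The set of permutations of `Fin n` avoiding the patterns 132, 2341 and 3241,
i.e. the 132-avoiding two-stack sortable permutations. -/
def TSS132 (n : ℕ) : Set (Fin n → Fin n) :=
  {π | Function.Bijective π ∧ Avoids π ![1,3,2] ∧ Avoids π ![2,3,4,1] ∧ Avoids π ![3,2,4,1]}

/-- The Pell numbers. -/
def pell : ℕ → ℕ
  | 0 => 0
  | 1 => 1
  | n+2 => 2 * pell (n+1) + pell n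

/-! The maximum sits at some position `i`. If `2 ≤ i < n - 1`, the positions `0 < 1 < i < n - 1`
carry four values, the largest in third place. If the last of them exceeds one of the first
two, that one together with `i` and `n - 1` forms a 132; otherwise the last value is the
smallest of the four, and the relative order of the first two gives a 2341 or a 3241. -/

section Patterns

variable {n : ℕ} {π : Fin n → Fin n} {a b c d : Fin n}

theorem contains_132 (hab : a < b) (hbc : b < c) (hac : π a < π c) (hcb : π c < π b) :
    Contains π ![1,3,2] :=
  ⟨![a, b, c], by simp [Fin.strictMono_iff_lt_succ, Fin.forall_fin_succ]; and_intros <;> order,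
    by simp [Fin.forall_fin_succ]; and_intros <;> order⟩

theorem contains_2341 (hab : a < b) (hbc : b < c) (hcd : c < d) (hda : π d < π a)
    (hab' : π a < π b) (hbc' : π b < π c) : Contains π ![2,3,4,1] :=
  ⟨![a, b, c, d], by simp [Fin.strictMono_iff_lt_succ, Fin.forall_fin_succ]; and_intros <;> order,
    by simp [Fin.forall_fin_succ]; and_intros <;> order⟩

theorem contains_3241 (hab : a < b) (hbc : b < c) (hcd : c < d) (hdb : π d < π b)
    (hba : π b < π a) (hac : π a < π c) : Contains π ![3,2,4,1] :=
  ⟨![a, b, c, d], by simp [Fin.strictMono_iff_lt_succ, Fin.forall_fin_succ]; and_intros <;> order,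
    by simp [Fin.forall_fin_succ]; and_intros <;> order⟩

theorem contains_132_or_2341_or_3241 (hπ : Function.Injective π) (hab : a < b) (hbc : b < c)
    (hcd : c < d) (ha : π a < π c) (hb : π b < π c) (hd : π d < π c) :
    Contains π ![1,3,2] ∨ Contains π ![2,3,4,1] ∨ Contains π ![3,2,4,1] := by
  rcases lt_or_gt_of_ne (hπ.ne ((hab.trans hbc).trans hcd).ne) with had | hda
  · exact .inl (contains_132 (hab.trans hbc) hcd had hd)
  rcases lt_or_gt_of_ne (hπ.ne (hbc.trans hcd).ne) with hbd | hdb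
  · exact .inl (contains_132 hbc hcd hbd hd)
  rcases lt_or_gt_of_ne (hπ.ne hab.ne) with hab' | hba
  · exact .inr (.inl (contains_2341 hab hbc hcd hda hab' hb))
  · exact .inr (.inr (contains_3241 hab hbc hcd hdb hba ha))

end Patterns

theorem stmt_0 (n : ℕ) (hn : 3 ≤ n) (π : Fin n → Fin n) (hπ : π ∈ TSS132 n)
    (i : Fin n) (hi : π i = ⟨n-1, by omega⟩) :
    i = ⟨0, by omega⟩ ∨ i = ⟨1, by omega⟩ ∨ i = ⟨n-1, by omega⟩ := by
  obtain ⟨hbij, h132, h2341, h3241⟩ := hπ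
  by_contra! hmid
  obtain ⟨h0, h1, hlast⟩ := hmid
  have hmax : ∀ j, j ≠ i → π j < π i := fun j hj =>
    lt_of_le_of_ne (hi ▸ Nat.le_sub_one_of_lt (π j).isLt) (hbij.1.ne hj)
  have h1i : 1 < i.val := by simp only [ne_eq, Fin.ext_iff] at h0 h1; omega
  have hin : i.val < n - 1 := by simp only [ne_eq, Fin.ext_iff] at hlast; omega
  rcases contains_132_or_2341_or_3241 hbij.1 (a := ⟨0, by omega⟩) (b := ⟨1, by omega⟩)
    (c := i) (d := ⟨n - 1, by omega⟩) (Fin.mk_lt_mk.mpr zero_lt_one) (Fin.mk_lt_of_lt_val h1i)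
    (Fin.lt_def.mpr hin) (hmax _ h0.symm) (hmax _ h1.symm) (hmax _ hlast.symm) with h | h | h
  exacts [h132 h, h2341 h, h3241 h]
end

section
/- For all n ≥ 3, the map π ↦ (n-1, n, π) is a bijection from P_{n-2}(132) onto the set of permutations in P_n(132) whose second entry is n. -/
/-!
The entries `n-1, n` placed in front of `π` exceed every later entry, so an occurrence of a
pattern `p` with `p 0 < p 2` (true of 132, 2341 and 3241) in `(n-1, n, π)` cannot use them and
is an occurrence in `π`. Conversely, if a 132-avoiding permutation `σ` has `σ 2 = n`, then
`σ 1 = n-1`: otherwise `σ 1, n, n-1` would be a 132.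
-/

theorem Contains.trans {n n' k : ℕ} {σ : Fin n' → Fin n'} {π : Fin n → Fin n}
    {p : Fin k → ℕ} (hσ : Contains σ fun i => (π i : ℕ)) (hπ : Contains π p) :
    Contains σ p := by
  obtain ⟨e, he, heπ⟩ := hσ
  obtain ⟨f, hf, hfp⟩ := hπ
  exact ⟨e ∘ f, he.comp hf, fun i j => (hfp i j).trans (heπ (f i) (f j))⟩

theorem contains_132_of_lt {n : ℕ} {σ : Fin n → Fin n} {a b c : Fin n} (hab : a < b)
    (hbc : b < c) (hac : σ a < σ c) (hcb : σ c < σ b) : Contains σ ![1, 3, 2] := by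
  refine ⟨![a, b, c], Fin.strictMono_iff_lt_succ.2 ?_, fun i j => ?_⟩
  · simp [Fin.forall_fin_succ, hab, hbc]
  · fin_cases i <;> fin_cases j <;> simp <;> order

/-- Values are 0-based, so this is the paper's `(n-1, n, π)` with `n = m + 2`. -/
def prependTopTwo {m : ℕ} (π : Fin m → Fin m) : Fin (m+2) → Fin (m+2) :=
  Fin.cons ((Fin.last m).castSucc) (Fin.cons (Fin.last (m+1)) (fun i => ((π i).castSucc).castSucc))

section prependTopTwo

variable {m : ℕ} (π : Fin m → Fin m)

@[simp] theorem prependTopTwo_zero : prependTopTwo π 0 = (Fin.last m).castSucc := rfl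

@[simp] theorem prependTopTwo_one : prependTopTwo π 1 = Fin.last (m+1) := rfl

@[simp] theorem prependTopTwo_addNat (i : Fin m) :
    prependTopTwo π (i.addNat 2) = (π i).castSucc.castSucc := rfl

theorem val_prependTopTwo_lt_iff (j : Fin (m+2)) :
    (prependTopTwo π j : ℕ) < m ↔ 2 ≤ (j : ℕ) := by
  rcases j with ⟨_ | _ | j, hj⟩
  · exact iff_of_false (lt_irrefl m) (by simp)
  · exact iff_of_false (by simp [prependTopTwo]) (by simp)
  · exact iff_of_true (π ⟨j, by omega⟩).isLt (by simp)

theorem contains_prependTopTwo_self : Contains (prependTopTwo π) fun i => (π i : ℕ) :=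
  ⟨(·.addNat 2), Fin.strictMono_addNat 2, fun i j => by simp⟩

theorem contains_prependTopTwo_iff {k : ℕ} {p : Fin (k+3) → ℕ} (hp : p 0 < p 2) :
    Contains (prependTopTwo π) p ↔ Contains π p := by
  refine ⟨?_, (contains_prependTopTwo_self π).trans⟩
  rintro ⟨f, hf, hfp⟩
  -- The two leading entries exceed all later ones, so `p 0 < p 2` keeps the occurrence off them.
  have h2 : 2 ≤ (f 0 : ℕ) := by
    have h02 := Fin.lt_def.1 ((hfp 0 2).1 hp)
    have h12 : 2 ≤ (f 2 : ℕ) := by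
      have h01 := Fin.lt_def.1 (hf (Fin.lt_def.2 Nat.one_pos : (0 : Fin (k+3)) < 1))
      have h12 := Fin.lt_def.1 (hf (Fin.lt_def.2 Nat.one_lt_two : (1 : Fin (k+3)) < 2))
      omega
    by_contra h
    have := (val_prependTopTwo_lt_iff π (f 0)).not.2 h
    have := (val_prependTopTwo_lt_iff π (f 2)).2 h12
    omega
  have hf2 : ∀ i, 2 ≤ (f i : ℕ) := fun i => h2.trans (hf.monotone (Fin.zero_le i))
  set g : Fin (k+3) → Fin m := fun i => (f i).subNat 2 (hf2 i)
  have hfg : ∀ i, f i = (g i).addNat 2 := fun i => (Fin.addNat_subNat _).symm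
  refine ⟨g, fun i j hij => ?_, fun i j => ?_⟩
  · simpa [hfg, Fin.addNat_lt_addNat_iff] using hf hij
  · simpa [hfg, Fin.castSucc_lt_castSucc_iff] using hfp i j

theorem injective_prependTopTwo_iff :
    Function.Injective (prependTopTwo π) ↔ Function.Injective π := by
  simp only [prependTopTwo, Fin.cons_injective_iff, Fin.range_cons, Set.mem_insert_iff,
    Fin.castSucc_ne_last, Set.mem_range, Fin.castSucc_inj, exists_false, or_self,
    not_false_eq_true, true_and]
  exact ((Fin.castSucc_injective _).comp (Fin.castSucc_injective _)).of_comp_iff π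

theorem bijective_prependTopTwo_iff :
    Function.Bijective (prependTopTwo π) ↔ Function.Bijective π := by
  rw [← Finite.injective_iff_bijective, ← Finite.injective_iff_bijective,
    injective_prependTopTwo_iff]

theorem prependTopTwo_mem_TSS132_iff : prependTopTwo π ∈ TSS132 (m+2) ↔ π ∈ TSS132 m := by
  simp only [TSS132, Set.mem_ofPred_eq, Avoids, bijective_prependTopTwo_iff,
    contains_prependTopTwo_iff π (k := 0) (p := ![1, 3, 2]) (by decide),
    contains_prependTopTwo_iff π (k := 1) (p := ![2, 3, 4, 1]) (by decide),
    contains_prependTopTwo_iff π (k := 1) (p := ![3, 2, 4, 1]) (by decide)]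

theorem prependTopTwo_injective : Function.Injective (prependTopTwo (m := m)) :=
  fun π τ h => funext fun i => by simpa using congrFun h (i.addNat 2)

theorem apply_zero_eq_castSucc_last {σ : Fin (m+2) → Fin (m+2)} (hσ : Function.Bijective σ)
    (h132 : Avoids σ ![1, 3, 2]) (h1 : σ 1 = Fin.last (m+1)) : σ 0 = (Fin.last m).castSucc := by
  obtain ⟨k, hk⟩ := hσ.2 (Fin.last m).castSucc
  by_contra h0
  have hk1 : 1 < k := by
    rcases k with ⟨_ | _ | k, _⟩
    · exact absurd hk h0
    · exact absurd (h1.symm.trans hk) (Fin.castSucc_ne_last _).symm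
    · exact Fin.lt_def.2 (by simp)
  have hσ0 : σ 0 < σ k := by
    have h01 : σ 0 ≠ Fin.last (m+1) := h1 ▸ hσ.1.ne (by simp)
    rw [hk, Fin.lt_def]
    simp only [Ne, Fin.ext_iff, Fin.val_last, Fin.val_castSucc] at h0 h01 ⊢
    omega
  exact h132 (contains_132_of_lt (by simp) hk1 hσ0 (by simp [hk, h1]))

theorem exists_prependTopTwo_eq {σ : Fin (m+2) → Fin (m+2)} (hσ : Function.Bijective σ)
    (h132 : Avoids σ ![1, 3, 2]) (h1 : σ 1 = Fin.last (m+1)) : ∃ π, prependTopTwo π = σ := by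
  have h0 := apply_zero_eq_castSucc_last hσ h132 h1
  have hlt : ∀ i : Fin m, (σ (i.addNat 2) : ℕ) < m := by
    intro i
    have h0' : σ (i.addNat 2) ≠ σ 0 := hσ.1.ne (by simp [Fin.ext_iff])
    have h1' : σ (i.addNat 2) ≠ σ 1 := hσ.1.ne (by simp [Fin.ext_iff])
    rw [h0] at h0'
    rw [h1] at h1'
    have := (σ (i.addNat 2)).isLt
    simp only [Ne, Fin.ext_iff, Fin.val_last, Fin.val_castSucc] at h0' h1'
    omega
  refine ⟨fun i => ⟨σ (i.addNat 2), hlt i⟩, funext fun j => ?_⟩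
  rcases j with ⟨_ | _ | j, hj⟩
  · exact h0.symm
  · exact h1.symm
  · rfl

end prependTopTwo

theorem stmt_3_general (m : ℕ) :
    Set.BijOn
      (fun π : Fin m → Fin m =>
        Fin.cons ((Fin.last m).castSucc)
          (Fin.cons (Fin.last (m+1)) (fun i => ((π i).castSucc).castSucc)))
      (TSS132 m)
      {σ ∈ TSS132 (m+2) | σ 1 = Fin.last (m+1)} := by
  refine ⟨fun π hπ => ⟨(prependTopTwo_mem_TSS132_iff π).2 hπ, prependTopTwo_one π⟩,
    prependTopTwo_injective.injOn, ?_⟩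
  rintro σ ⟨hσ, h1⟩
  obtain ⟨π, rfl⟩ := exists_prependTopTwo_eq hσ.1 hσ.2.1 h1
  exact ⟨π, (prependTopTwo_mem_TSS132_iff π).1 hσ, rfl⟩

theorem stmt_3 (m : ℕ) (hm : 1 ≤ m) :
    Set.BijOn
      (fun π : Fin m → Fin m =>
        Fin.cons ((Fin.last m).castSucc)
          (Fin.cons (Fin.last (m+1)) (fun i => ((π i).castSucc).castSucc)))
      (TSS132 m)
      {σ ∈ TSS132 (m+2) | σ 1 = Fin.last (m+1)} :=
  stmt_3_general m
end

section
/- For all n ≥ 1, the number of permutations of {1,...,n} avoiding the patterns 132, 2341, and 3241 equals the n-th Pell number p_n, where p_0 = 0, p_1 = 1, and p_n = 2p_{n-1} + p_{n-2}. -/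
/-!
In a 132-avoiding permutation every entry before the maximum exceeds every entry after it.
Were the maximum of a permutation of length `N ≥ 3` anywhere but in the first, second or last
position, the first two entries, the maximum and the entry after it would form a 2341 or a
3241. So the class consists of the words `π N`, `N π` and `(N-1) N π'` (in the last family the
first entry exceeds all later ones, hence is `N-1`) with `π`, `π'` in the class, and conversely
all such words lie in it. These families are disjoint, so `a N = 2 a (N-1) + a (N-2)`, and for
`N ≤ 2` every permutation qualifies.

In 0-indexed form the three families are `insertMax (Fin.last _) π`, `insertMax 0 π` and
`insertMax 1 (insertMax 0 π')`.
-/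

open Function

section Patterns

variable {n : ℕ} {σ : Fin n → Fin n}

lemma avoids_of_lt {k : ℕ} {p : Fin k → ℕ} (h : n < k) : Avoids σ p :=
  fun ⟨f, hf, _⟩ => (Fin.le_of_injective f hf.injective).not_gt h

lemma contains_132_s4 {i j l : Fin n} (hij : i < j) (hjl : j < l) (hil : σ i < σ l)
    (hlj : σ l < σ j) : Contains σ ![1, 3, 2] := by
  refine ⟨![i, j, l], by simp [hij, hjl], ?_⟩
  have hij' := hil.trans hlj
  intro a b
  fin_cases a <;> fin_cases b <;> simp [*, hil.le, hlj.le, hij'.le]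

lemma contains_2341_or_3241 {i j l r : Fin n} (hij : i < j) (hjl : j < l) (hlr : l < r)
    (hri : σ r < σ i) (hrj : σ r < σ j) (hil : σ i < σ l) (hjl' : σ j < σ l)
    (hne : σ i ≠ σ j) : Contains σ ![2, 3, 4, 1] ∨ Contains σ ![3, 2, 4, 1] := by
  have hmono : StrictMono ![i, j, l, r] := by simp [hij, hjl, hlr]
  have hrl := hri.trans hil
  rcases hne.lt_or_gt with h | h
  · refine .inl ⟨_, hmono, fun a b => ?_⟩
    fin_cases a <;> fin_cases b <;> simp [*, hri.le, hrj.le, hil.le, hjl'.le, hrl.le, h.le]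
  · refine .inr ⟨_, hmono, fun a b => ?_⟩
    fin_cases a <;> fin_cases b <;> simp [*, hri.le, hrj.le, hil.le, hjl'.le, hrl.le, h.le]

end Patterns

section InsertMax

variable {n : ℕ}

def insertMax (m : Fin (n + 1)) (π : Fin n → Fin n) : Fin (n + 1) → Fin (n + 1) :=
  Fin.insertNth m (Fin.last n) (Fin.castSucc ∘ π)

variable {m : Fin (n + 1)} {π : Fin n → Fin n}

@[simp] lemma insertMax_apply_same : insertMax m π m = Fin.last n :=
  Fin.insertNth_apply_same _ _ _

@[simp] lemma insertMax_apply_succAbove (i : Fin n) :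
    insertMax m π (m.succAbove i) = (π i).castSucc :=
  Fin.insertNth_apply_succAbove _ _ _ _

lemma insertMax_apply_lt_last {x : Fin (n + 1)} (hx : x ≠ m) : insertMax m π x < Fin.last n := by
  obtain ⟨i, rfl⟩ := Fin.exists_succAbove_eq hx
  simp

lemma insertMax_inj {m' : Fin (n + 1)} {π' : Fin n → Fin n} :
    insertMax m π = insertMax m' π' ↔ m = m' ∧ π = π' := by
  refine ⟨fun h => ?_, fun ⟨hm, hπ⟩ => hm ▸ hπ ▸ rfl⟩
  obtain rfl : m = m' := by
    by_contra hne
    have := congrFun h m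
    rw [insertMax_apply_same] at this
    exact (insertMax_apply_lt_last hne).ne' this
  exact ⟨rfl, funext fun i => Fin.castSucc_injective _ <| by
    simpa using congrFun h (m.succAbove i)⟩

lemma insertMax_injective (m : Fin (n + 1)) : Injective (insertMax (n := n) m) :=
  fun _ _ h => (insertMax_inj.1 h).2

lemma disjoint_range_insertMax {m' : Fin (n + 1)} (h : m ≠ m') :
    Disjoint (Set.range (insertMax (n := n) m)) (Set.range (insertMax m')) := by
  rw [Set.disjoint_left]
  rintro _ ⟨π, rfl⟩ ⟨π', h'⟩
  exact h (insertMax_inj.1 h'.symm).1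

lemma bijective_insertMax_iff : Bijective (insertMax m π) ↔ Bijective π := by
  rw [← Finite.surjective_iff_bijective, ← Finite.surjective_iff_bijective]
  constructor
  · intro h y
    obtain ⟨x, hx⟩ := h y.castSucc
    have hxm : x ≠ m := by rintro rfl; exact (Fin.castSucc_lt_last y).ne' (by simpa using hx)
    obtain ⟨i, rfl⟩ := Fin.exists_succAbove_eq hxm
    exact ⟨i, Fin.castSucc_injective _ (by simpa using hx)⟩
  · intro h y
    rcases Fin.eq_castSucc_or_eq_last y with ⟨y, rfl⟩ | rfl
    · obtain ⟨i, rfl⟩ := h y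
      exact ⟨_, insertMax_apply_succAbove i⟩
    · exact ⟨m, insertMax_apply_same⟩

lemma exists_insertMax_eq {σ : Fin (n + 1) → Fin (n + 1)} (hσ : Bijective σ) :
    ∃ m π, σ = insertMax m π := by
  obtain ⟨m, hm⟩ := hσ.2 (Fin.last n)
  have hne (i : Fin n) : σ (m.succAbove i) ≠ Fin.last n :=
    hm ▸ hσ.1.ne (Fin.succAbove_ne m i)
  refine ⟨m, fun i => (σ (m.succAbove i)).castPred (hne i), funext fun x => ?_⟩
  rcases eq_or_ne x m with rfl | hx
  · simp [hm]
  · obtain ⟨i, rfl⟩ := Fin.exists_succAbove_eq hx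
    simp

end InsertMax

section Occurrences

variable {n k : ℕ}

-- `Contains σ p` unfolds to `∃ f, IsOccurrence σ p f`.
def IsOccurrence (σ : Fin n → Fin n) (p : Fin k → ℕ) (f : Fin k → Fin n) : Prop :=
  StrictMono f ∧ ∀ i j, p i < p j ↔ σ (f i) < σ (f j)

variable {m : Fin (n + 1)} {π : Fin n → Fin n} {p : Fin k → ℕ} {f : Fin k → Fin (n + 1)}

lemma Contains.insertMax (h : Contains π p) (m : Fin (n + 1)) : Contains (insertMax m π) p := by
  obtain ⟨f, hf, hp⟩ := h
  exact ⟨m.succAbove ∘ f, (Fin.strictMono_succAbove m).comp hf, by simp [hp]⟩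

lemma Avoids.of_insertMax (h : Avoids (insertMax m π) p) : Avoids π p :=
  fun hπ => h (hπ.insertMax m)

lemma IsOccurrence.not_lt_of_apply_eq (hf : IsOccurrence (insertMax m π) p f) {l : Fin k}
    (hl : f l = m) (j : Fin k) : ¬ p l < p j := by
  rw [hf.2, hl, insertMax_apply_same]
  exact not_lt.2 (Fin.le_last _)

lemma IsOccurrence.contains_of_forall_ne (hf : IsOccurrence (insertMax m π) p f)
    (hm : ∀ l, f l ≠ m) : Contains π p := by
  choose g hg using fun l => Fin.exists_succAbove_eq (hm l)
  refine ⟨g, fun a b hab => ?_, fun a b => ?_⟩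
  · rw [← Fin.succAbove_lt_succAbove_iff (p := m), hg, hg]
    exact hf.1 hab
  · rw [hf.2, ← hg a, ← hg b]
    simp

lemma avoids_insertMax (h : Avoids π p)
    (hm : ∀ f, IsOccurrence (insertMax m π) p f → ∀ l, f l ≠ m) :
    Avoids (insertMax m π) p :=
  fun ⟨f, hf⟩ => h (IsOccurrence.contains_of_forall_ne hf (hm f hf))

lemma avoids_insertMax_zero {p : Fin (k + 1) → ℕ} (h : Avoids π p) {j : Fin (k + 1)}
    (hj : p 0 < p j) : Avoids (insertMax 0 π) p := by
  refine avoids_insertMax h fun f hf l hl => ?_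
  obtain rfl : l = 0 := by
    by_contra hne
    exact Fin.not_lt_zero _ (hl ▸ hf.1 (Fin.pos_iff_ne_zero.2 hne))
  exact hf.not_lt_of_apply_eq hl j hj

lemma avoids_insertMax_last {p : Fin (k + 1) → ℕ} (h : Avoids π p) {j : Fin (k + 1)}
    (hj : p (Fin.last k) < p j) : Avoids (insertMax (Fin.last n) π) p := by
  refine avoids_insertMax h fun f hf l hl => ?_
  obtain rfl : l = Fin.last k := by
    by_contra hne
    exact not_lt.2 (Fin.le_last _) (hl ▸ hf.1 (Fin.lt_last_iff_ne_last.2 hne))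
  exact hf.not_lt_of_apply_eq hl j hj

lemma avoids_insertMax_one {π : Fin (n + 1) → Fin (n + 1)} {p : Fin (k + 2) → ℕ}
    (h : Avoids π p) {j : Fin (k + 2)} (h0 : p 0 < p j) (h1 : p 1 < p j) :
    Avoids (insertMax 1 π) p := by
  refine avoids_insertMax h fun f hf l hl => ?_
  rcases lt_trichotomy l 1 with hl1 | rfl | hl1
  · rw [(Fin.lt_one_iff l).1 hl1] at hl
    exact hf.not_lt_of_apply_eq hl j h0
  · exact hf.not_lt_of_apply_eq hl j h1
  · have h10 : f 1 = 0 := (Fin.lt_one_iff _).1 (hl ▸ hf.1 hl1)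
    exact absurd (h10 ▸ hf.1 Fin.zero_lt_one) (Fin.not_lt_zero _)

end Occurrences

section Avoids132

variable {n : ℕ}

lemma apply_lt_apply_of_avoids_132 {σ : Fin (n + 1) → Fin (n + 1)} (h : Avoids σ ![1, 3, 2])
    (hσ : Injective σ) {m a r : Fin (n + 1)} (hm : σ m = Fin.last n) (ham : a < m)
    (hmr : m < r) : σ r < σ a := by
  by_contra hra
  have har : σ a < σ r := lt_of_le_of_ne (not_lt.1 hra) (hσ.ne (ham.trans hmr).ne)
  have hrm : σ r < σ m := lt_of_le_of_ne (hm ▸ Fin.le_last _) (hσ.ne hmr.ne')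
  exact h (contains_132_s4 ham hmr har hrm)

lemma avoids_132_insertMax {m : Fin (n + 1)} {π : Fin n → Fin n} (h : Avoids π ![1, 3, 2])
    (hm : ∀ a r, a < m → m < r → insertMax m π r < insertMax m π a) :
    Avoids (insertMax m π) ![1, 3, 2] := by
  -- The new maximum can only play the `3`; the `1` and the `2` then straddle it in the wrong order.
  refine avoids_insertMax h fun f hf l hl => ?_
  obtain rfl : l = 1 := by
    fin_cases l
    · exact absurd (hf.not_lt_of_apply_eq hl 1) (by decide)
    · rfl
    · exact absurd (hf.not_lt_of_apply_eq hl 1) (by decide)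
  have h02 := (hf.2 0 2).1 (by decide)
  have h01 : f 0 < m := hl ▸ hf.1 (show (0 : Fin 3) < 1 by decide)
  have h12 : m < f 2 := hl ▸ hf.1 (show (1 : Fin 3) < 2 by decide)
  exact lt_asymm h02 (hm _ _ h01 h12)

end Avoids132

section Decomposition

variable {n : ℕ} {π : Fin n → Fin n}

lemma mem_TSS132_of_insertMax_mem {m : Fin (n + 1)} (h : insertMax m π ∈ TSS132 (n + 1)) :
    π ∈ TSS132 n :=
  ⟨bijective_insertMax_iff.1 h.1, h.2.1.of_insertMax, h.2.2.1.of_insertMax,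
    h.2.2.2.of_insertMax⟩

lemma insertMax_last_mem (h : π ∈ TSS132 n) : insertMax (Fin.last n) π ∈ TSS132 (n + 1) :=
  ⟨bijective_insertMax_iff.2 h.1, avoids_insertMax_last h.2.1 (j := 1) (by decide),
    avoids_insertMax_last h.2.2.1 (j := 2) (by decide),
    avoids_insertMax_last h.2.2.2 (j := 2) (by decide)⟩

lemma insertMax_zero_mem (h : π ∈ TSS132 n) : insertMax 0 π ∈ TSS132 (n + 1) :=
  ⟨bijective_insertMax_iff.2 h.1, avoids_insertMax_zero h.2.1 (j := 1) (by decide),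
    avoids_insertMax_zero h.2.2.1 (j := 2) (by decide),
    avoids_insertMax_zero h.2.2.2 (j := 2) (by decide)⟩

lemma insertMax_one_insertMax_zero_mem (h : π ∈ TSS132 n) :
    insertMax 1 (insertMax 0 π) ∈ TSS132 (n + 2) := by
  have h0 := insertMax_zero_mem h
  refine ⟨bijective_insertMax_iff.2 h0.1, avoids_132_insertMax h0.2.1 ?_,
    avoids_insertMax_one h0.2.2.1 (j := 2) (by decide) (by decide),
    avoids_insertMax_one h0.2.2.2 (j := 2) (by decide) (by decide)⟩
  intro a r ha hr
  obtain rfl := (Fin.lt_one_iff a).1 ha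
  obtain ⟨x, rfl⟩ := Fin.exists_succAbove_eq hr.ne'
  have hx : x ≠ 0 := by rintro rfl; simp at hr
  obtain ⟨j, rfl⟩ := Fin.exists_succ_eq.2 hx
  have h0 : insertMax 1 (insertMax 0 π) 0 = (Fin.last n).castSucc := by
    simpa using insertMax_apply_succAbove (m := 1) (π := insertMax 0 π) 0
  rw [h0, insertMax_apply_succAbove, ← Fin.succAbove_zero, insertMax_apply_succAbove]
  simp

lemma eq_zero_or_eq_one_or_eq_last_of_insertMax_mem {m : Fin (n + 3)}
    {π : Fin (n + 2) → Fin (n + 2)} (h : insertMax m π ∈ TSS132 (n + 3)) :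
    m = 0 ∨ m = 1 ∨ m = Fin.last _ := by
  obtain ⟨hσ, h132, h2341, h3241⟩ := h
  by_contra! hm
  obtain ⟨hm0, hm1, hml⟩ := hm
  have hmn := Fin.val_lt_last hml
  let r : Fin (n + 3) := ⟨m + 1, by omega⟩
  have h01 : (0 : Fin (n + 3)) < 1 := Fin.zero_lt_one
  have h1m : (1 : Fin (n + 3)) < m := by
    rw [Fin.lt_def]
    rw [Ne, Fin.ext_iff] at hm0 hm1
    simp only [Fin.val_zero, Fin.val_one] at hm0 hm1 ⊢
    omega
  have hmr : m < r := by simp [Fin.lt_def, r]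
  have hr0 := apply_lt_apply_of_avoids_132 h132 hσ.1 insertMax_apply_same (h01.trans h1m) hmr
  have hr1 := apply_lt_apply_of_avoids_132 h132 hσ.1 insertMax_apply_same h1m hmr
  have h0m : insertMax m π 0 < insertMax m π m := by
    simpa using insertMax_apply_lt_last (h01.trans h1m).ne
  have h1m' : insertMax m π 1 < insertMax m π m := by
    simpa using insertMax_apply_lt_last h1m.ne
  rcases contains_2341_or_3241 h01 h1m hmr hr0 hr1 h0m h1m' (hσ.1.ne h01.ne) with h' | h'
  exacts [h2341 h', h3241 h']

lemma exists_eq_insertMax_zero_of_insertMax_one_mem {π : Fin (n + 2) → Fin (n + 2)}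
    (h : insertMax 1 π ∈ TSS132 (n + 3)) : ∃ π', π = insertMax 0 π' := by
  obtain ⟨m, π', rfl⟩ := exists_insertMax_eq (bijective_insertMax_iff.1 h.1)
  refine ⟨π', ?_⟩
  obtain rfl : m = 0 := by
    by_contra hm
    obtain ⟨j, rfl⟩ := Fin.exists_succ_eq.2 hm
    have hr : (1 : Fin (n + 3)) < j.succ.succ := by simp [Fin.lt_def]
    have := apply_lt_apply_of_avoids_132 h.2.1 h.1.1 insertMax_apply_same Fin.zero_lt_one hr
    have h0 : insertMax 1 (insertMax j.succ π') 0 = (insertMax j.succ π' 0).castSucc := by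
      simpa using insertMax_apply_succAbove (m := 1) (π := insertMax j.succ π') 0
    rw [h0, ← Fin.one_succAbove_succ, insertMax_apply_succAbove, insertMax_apply_same,
      Fin.castSucc_lt_castSucc_iff] at this
    exact not_lt.2 (Fin.le_last _) this
  rfl

lemma TSS132_add_three (n : ℕ) : TSS132 (n + 3) =
    insertMax (Fin.last _) '' TSS132 (n + 2) ∪ insertMax 0 '' TSS132 (n + 2) ∪
      (insertMax 1 ∘ insertMax 0) '' TSS132 (n + 1) := by
  ext σ
  constructor
  · intro hσ
    obtain ⟨m, π, rfl⟩ := exists_insertMax_eq hσ.1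
    have hπ := mem_TSS132_of_insertMax_mem hσ
    rcases eq_zero_or_eq_one_or_eq_last_of_insertMax_mem hσ with rfl | rfl | rfl
    · exact .inl (.inr ⟨π, hπ, rfl⟩)
    · obtain ⟨π', rfl⟩ := exists_eq_insertMax_zero_of_insertMax_one_mem hσ
      exact .inr ⟨π', mem_TSS132_of_insertMax_mem hπ, rfl⟩
    · exact .inl (.inl ⟨π, hπ, rfl⟩)
  · rintro ((⟨π, hπ, rfl⟩ | ⟨π, hπ, rfl⟩) | ⟨π, hπ, rfl⟩)
    exacts [insertMax_last_mem hπ, insertMax_zero_mem hπ, insertMax_one_insertMax_zero_mem hπ]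

end Decomposition

lemma ncard_TSS132_of_lt_three {n : ℕ} (hn : n < 3) : (TSS132 n).ncard = n.factorial := by
  have : TSS132 n = {π | Bijective π} := by
    ext π
    simp [TSS132, avoids_of_lt (σ := π) (show n < 3 by omega),
      avoids_of_lt (σ := π) (show n < 4 by omega)]
  rw [this, ← Nat.card_coe_set_eq, Set.coe_ofPred, Nat.card_congr Equiv.bijectiveEquiv,
    Nat.card_perm, Nat.card_eq_fintype_card, Fintype.card_fin]

lemma ncard_TSS132_add_three (n : ℕ) :
    (TSS132 (n + 3)).ncard = 2 * (TSS132 (n + 2)).ncard + (TSS132 (n + 1)).ncard := by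
  have hdisj {m m' : Fin (n + 3)} (h : m ≠ m') {s t : Set (Fin (n + 2) → Fin (n + 2))} :
      Disjoint (insertMax m '' s) (insertMax m' '' t) :=
    (disjoint_range_insertMax h).mono (Set.image_subset_range _ _) (Set.image_subset_range _ _)
  have hlast0 : Fin.last (n + 2) ≠ 0 := Fin.last_pos.ne'
  have hlast1 : Fin.last (n + 2) ≠ 1 := by simp [Fin.ext_iff]
  rw [TSS132_add_three, Set.image_comp,
    Set.ncard_union_eq (Set.disjoint_union_left.2 ⟨hdisj hlast1, hdisj Fin.zero_ne_one⟩),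
    Set.ncard_union_eq (hdisj hlast0), Set.ncard_image_of_injective _ (insertMax_injective _),
    Set.ncard_image_of_injective _ (insertMax_injective _),
    Set.ncard_image_of_injective _ (insertMax_injective _),
    Set.ncard_image_of_injective _ (insertMax_injective _)]
  ring

theorem stmt_4 (n : ℕ) (hn : 1 ≤ n) : Nat.card ↥(TSS132 n) = pell n := by
  obtain ⟨n, rfl⟩ := Nat.exists_eq_add_of_le' hn
  rw [Nat.card_coe_set_eq]
  clear hn
  induction n using Nat.twoStepInduction with
  | zero => exact ncard_TSS132_of_lt_three (n := 1) (by norm_num)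
  | one => exact ncard_TSS132_of_lt_three (n := 2) (by norm_num)
  | more n ih₁ ih₂ =>
    rw [ncard_TSS132_add_three, ih₁, ih₂]
    rfl
end

section
/- For all n ≥ 2, the number of permutations of {1,...,n} avoiding the patterns 132, 2341, 3241, and 312 equals 2n - 2. -/
open Finset

variable {n : ℕ}

lemma contains_132_iff {π : Fin n → Fin n} :
    Contains π ![1,3,2] ↔ ∃ a b c, a < b ∧ b < c ∧ π a < π c ∧ π c < π b := by
  refine ⟨fun ⟨f, hf, hp⟩ ↦ ?_, fun ⟨a, b, c, hab, hbc, h₁, h₂⟩ ↦ ?_⟩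
  · exact ⟨f 0, f 1, f 2, hf (by decide), hf (by decide), (hp 0 2).1 (by decide),
      (hp 2 1).1 (by decide)⟩
  · exact ⟨![a,b,c], by simp [*], by
      intro i j; fin_cases i <;> fin_cases j <;> simp <;> order⟩

lemma contains_312_iff {π : Fin n → Fin n} :
    Contains π ![3,1,2] ↔ ∃ a b c, a < b ∧ b < c ∧ π b < π c ∧ π c < π a := by
  refine ⟨fun ⟨f, hf, hp⟩ ↦ ?_, fun ⟨a, b, c, hab, hbc, h₁, h₂⟩ ↦ ?_⟩
  · exact ⟨f 0, f 1, f 2, hf (by decide), hf (by decide), (hp 1 2).1 (by decide),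
      (hp 2 0).1 (by decide)⟩
  · exact ⟨![a,b,c], by simp [*], by
      intro i j; fin_cases i <;> fin_cases j <;> simp <;> order⟩

lemma contains_2341_iff {π : Fin n → Fin n} :
    Contains π ![2,3,4,1] ↔ ∃ a b c d, a < b ∧ b < c ∧ c < d ∧
      π d < π a ∧ π a < π b ∧ π b < π c := by
  refine ⟨fun ⟨f, hf, hp⟩ ↦ ?_, fun ⟨a, b, c, d, hab, hbc, hcd, h₁, h₂, h₃⟩ ↦ ?_⟩
  · exact ⟨f 0, f 1, f 2, f 3, hf (by decide), hf (by decide), hf (by decide),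
      (hp 3 0).1 (by decide), (hp 0 1).1 (by decide), (hp 1 2).1 (by decide)⟩
  · exact ⟨![a,b,c,d], by simp [*], by
      intro i j; fin_cases i <;> fin_cases j <;> simp <;> order⟩

lemma contains_3241_iff {π : Fin n → Fin n} :
    Contains π ![3,2,4,1] ↔ ∃ a b c d, a < b ∧ b < c ∧ c < d ∧
      π d < π b ∧ π b < π a ∧ π a < π c := by
  refine ⟨fun ⟨f, hf, hp⟩ ↦ ?_, fun ⟨a, b, c, d, hab, hbc, hcd, h₁, h₂, h₃⟩ ↦ ?_⟩
  · exact ⟨f 0, f 1, f 2, f 3, hf (by decide), hf (by decide), hf (by decide),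
      (hp 3 1).1 (by decide), (hp 1 0).1 (by decide), (hp 0 2).1 (by decide)⟩
  · exact ⟨![a,b,c,d], by simp [*], by
      intro i j; fin_cases i <;> fin_cases j <;> simp <;> order⟩

lemma val_eq_card_filter_lt {π : Fin n → Fin n} (hπ : π.Bijective) (a : Fin n) :
    (π a : ℕ) = #{b | π b < π a} := by
  rw [← Fin.card_Iio (π a)]
  exact (Finset.card_equiv (Equiv.ofBijective π hπ) (by simp)).symm

lemma eq_of_lt_iff_lt {π σ : Fin n → Fin n} (hπ : π.Bijective) (hσ : σ.Bijective)
    (h : ∀ a b, a < b → (π a < π b ↔ σ a < σ b)) : π = σ := by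
  have key : ∀ a b, π b < π a ↔ σ b < σ a := by
    intro a b
    rcases lt_trichotomy a b with hab | rfl | hba
    · rw [← not_iff_not, not_lt, not_lt, (hπ.1.ne hab.ne).le_iff_lt,
        (hσ.1.ne hab.ne).le_iff_lt]
      exact h a b hab
    · simp
    · exact h b a hba
  funext a
  ext
  simp only [val_eq_card_filter_lt hπ, val_eq_card_filter_lt hσ, key]

/-- `U` marks the left-to-right maxima of `π`, and every other entry is a left-to-right
minimum (the condition at `b = 0` is vacuous). -/
def HasLRMaxima (π : Fin n → Fin n) (U : Fin n → Prop) : Prop :=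
  ∀ a b, a < b → (π a < π b ↔ U b)

lemma hasLRMaxima_of_avoids {π : Fin n → Fin n} (hπ : π.Injective)
    (h132 : Avoids π ![1,3,2]) (h312 : Avoids π ![3,1,2]) :
    HasLRMaxima π (fun b ↦ ∀ a < b, π a < π b) := by
  refine fun a b hab ↦ ⟨fun hlt c hcb ↦ ?_, fun h ↦ h a hab⟩
  by_contra hc
  have hbc : π b < π c := (not_lt.1 hc).lt_of_ne (hπ.ne hcb.ne')
  rcases lt_trichotomy a c with hac | rfl | hca
  · exact h132 (contains_132_iff.2 ⟨a, c, b, hac, hcb, hlt, hbc⟩)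
  · exact hc hlt
  · exact h312 (contains_312_iff.2 ⟨c, a, b, hca, hab, hlt, hbc⟩)

namespace HasLRMaxima

variable {π : Fin n → Fin n} {U : Fin n → Prop}

lemma avoids_132 (h : HasLRMaxima π U) : Avoids π ![1,3,2] := by
  rw [Avoids, contains_132_iff]
  rintro ⟨a, b, c, hab, hbc, h₁, h₂⟩
  exact h₂.not_gt ((h b c hbc).2 ((h a c (hab.trans hbc)).1 h₁))

lemma avoids_312 (h : HasLRMaxima π U) : Avoids π ![3,1,2] := by
  rw [Avoids, contains_312_iff]
  rintro ⟨a, b, c, hab, hbc, h₁, h₂⟩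
  exact h₂.not_gt ((h a c (hab.trans hbc)).2 ((h b c hbc).1 h₁))

lemma avoids_2341 (h : HasLRMaxima π U) (hU : ∀ c d : Fin n, 2 ≤ c.val → c < d → U c → U d) :
    Avoids π ![2,3,4,1] := by
  rw [Avoids, contains_2341_iff]
  rintro ⟨a, b, c, d, hab, hbc, hcd, h₁, h₂, h₃⟩
  have hc : 2 ≤ c.val := by omega
  have hUd := hU c d hc hcd ((h a c (hab.trans hbc)).1 (h₂.trans h₃))
  exact ((h c d hcd).2 hUd).not_gt (h₁.trans (h₂.trans h₃))

lemma avoids_3241 (h : HasLRMaxima π U) (hU : ∀ c d : Fin n, 2 ≤ c.val → c < d → U c → U d) :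
    Avoids π ![3,2,4,1] := by
  rw [Avoids, contains_3241_iff]
  rintro ⟨a, b, c, d, hab, hbc, hcd, h₁, h₂, h₃⟩
  have hc : 2 ≤ c.val := by omega
  have hUd := hU c d hc hcd ((h a c (hab.trans hbc)).1 h₃)
  exact ((h c d hcd).2 hUd).not_gt (h₁.trans (h₂.trans h₃))

/-- Otherwise the first two entries, a later maximum and a minimum after it would form 2341 or
3241. -/
lemma maxima_upward_closed (h : HasLRMaxima π U) (hπ : π.Injective)
    (h2341 : Avoids π ![2,3,4,1]) (h3241 : Avoids π ![3,2,4,1]) :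
    ∀ c d : Fin n, 2 ≤ c.val → c < d → U c → U d := by
  intro c d hc hcd hUc
  by_contra hUd
  let i₀ : Fin n := ⟨0, by omega⟩
  let i₁ : Fin n := ⟨1, by omega⟩
  have h01 : i₀ < i₁ := Fin.mk_lt_mk.2 zero_lt_one
  have h1c : i₁ < c := Fin.mk_lt_mk.2 (by omega)
  have h₀c := (h i₀ c (h01.trans h1c)).2 hUc
  have h₁c := (h i₁ c h1c).2 hUc
  have hd₀ := not_lt.1 (mt (h i₀ d (h01.trans (h1c.trans hcd))).1 hUd)
  have hd₁ := not_lt.1 (mt (h i₁ d (h1c.trans hcd)).1 hUd)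
  rcases (hπ.ne h01.ne).lt_or_gt with h₀₁ | h₁₀
  · exact h2341 (contains_2341_iff.2 ⟨i₀, i₁, c, d, h01, h1c, hcd,
      (hd₀.lt_of_ne (hπ.ne (h01.trans (h1c.trans hcd)).ne')), h₀₁, h₁c⟩)
  · exact h3241 (contains_3241_iff.2 ⟨i₀, i₁, c, d, h01, h1c, hcd,
      (hd₁.lt_of_ne (hπ.ne (h1c.trans hcd).ne')), h₁₀, h₀c⟩)

end HasLRMaxima

lemma exists_threshold_of_upward_closed {U : Fin n → Prop} (hn : 2 ≤ n)
    (hU : ∀ c d : Fin n, 2 ≤ c.val → c < d → U c → U d) :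
    ∃ k, 1 ≤ k ∧ k < n ∧ ∀ b : Fin n, 2 ≤ b.val → (U b ↔ k < b.val) := by
  classical
  have hP : ∃ k, 1 ≤ k ∧ ∀ b : Fin n, k < b.val → U b :=
    ⟨n - 1, by omega, fun b hb ↦ absurd b.2 (by omega)⟩
  refine ⟨Nat.find hP, (Nat.find_spec hP).1, ?_,
    fun b hb ↦ ⟨fun hUb ↦ ?_, (Nat.find_spec hP).2 b⟩⟩
  · have := Nat.find_min' hP (m := n - 1) ⟨by omega, fun b hb ↦ absurd b.2 (by omega)⟩
    omega
  · have := Nat.find_min' hP (m := b.val - 1) ⟨by omega, fun d hd ↦ ?_⟩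
    · omega
    · rcases eq_or_lt_of_le (show b.val ≤ d.val by omega) with h | h
      · exact Fin.ext h ▸ hUb
      · exact hU b d hb h hUb

/-- The permutation `j+1, j, …, 1, 0, j+2, …, m` if `s = false`, and the same with its first
two entries exchanged if `s = true`. -/
def zigzag {m : ℕ} (s : Bool) (j : Fin m) (i : Fin (m + 1)) : Fin (m + 1) :=
  ⟨if j.val + 1 < i.val then i.val
    else if s ∧ i.val ≤ 1 then j.val + i.val
    else j.val + 1 - i.val, by split_ifs <;> omega⟩

section Zigzag

variable {m : ℕ}

lemma hasLRMaxima_zigzag (s : Bool) (j : Fin m) :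
    HasLRMaxima (zigzag s j) (fun b ↦ j.val + 1 < b.val ∨ (b.val = 1 ∧ s)) := by
  intro a b hab
  rw [Fin.lt_def] at hab
  cases s <;>
    simp only [zigzag, Fin.lt_def, Bool.false_eq_true, false_and, and_false, or_false,
      true_and, and_true, if_false] <;>
    split_ifs <;> omega

lemma zigzag_injective (s : Bool) (j : Fin m) : (zigzag s j).Injective := by
  intro a b h
  simp only [zigzag, Fin.ext_iff] at h
  ext
  cases s <;> simp only [Bool.false_eq_true, false_and, true_and, if_false] at h <;>
    split_ifs at h <;> omega

lemma zigzag_bijective (s : Bool) (j : Fin m) : (zigzag s j).Bijective :=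
  Finite.injective_iff_bijective.1 (zigzag_injective s j)

lemma uncurry_zigzag_injective : (Function.uncurry (zigzag (m := m))).Injective := by
  rintro ⟨s, j⟩ ⟨t, k⟩ h
  have h₀ := congrArg Fin.val (congrFun h 0)
  have h₁ := congrArg Fin.val (congrFun h 1)
  simp only [Function.uncurry_apply_pair, zigzag] at h₀ h₁
  have hm : 1 < m + 1 := by have := j.2; omega
  cases s <;> cases t <;> simp [Nat.mod_eq_of_lt hm] at h₀ h₁ ⊢ <;> omega

end Zigzag

lemma exists_hasLRMaxima_threshold {π : Fin n → Fin n} (hn : 2 ≤ n) (hπ : π ∈ TSS132 n)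
    (h312 : Avoids π ![3,1,2]) :
    ∃ k, 1 ≤ k ∧ k < n ∧ ∃ s : Bool, HasLRMaxima π (fun b ↦ k < b.val ∨ (b.val = 1 ∧ s)) := by
  obtain ⟨hbij, h132, h2341, h3241⟩ := hπ
  have hU := hasLRMaxima_of_avoids hbij.1 h132 h312
  obtain ⟨k, hk1, hkn, hk⟩ :=
    exists_threshold_of_upward_closed hn (hU.maxima_upward_closed hbij.1 h2341 h3241)
  let i₀ : Fin n := ⟨0, by omega⟩
  let i₁ : Fin n := ⟨1, by omega⟩
  refine ⟨k, hk1, hkn, decide (π i₀ < π i₁), fun a b hab ↦ ?_⟩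
  rcases Nat.lt_or_ge b.val 2 with hb | hb
  · obtain rfl : a = i₀ := Fin.ext (show a.val = 0 by omega)
    obtain rfl : b = i₁ := Fin.ext (show b.val = 1 by omega)
    simp [i₁, Nat.one_le_iff_ne_zero.1 hk1]
  · exact (hU a b hab).trans ((hk b hb).trans (or_iff_left (by omega)).symm)

lemma setOf_tss132_avoids_312_eq_range (m : ℕ) :
    {π ∈ TSS132 (m + 2) | Avoids π ![3,1,2]} =
      Set.range (Function.uncurry (zigzag (m := m + 1))) := by
  ext π
  constructor
  · rintro ⟨hπ, h312⟩
    obtain ⟨k, hk1, hkn, s, hs⟩ := exists_hasLRMaxima_threshold (by omega) hπ h312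
    refine ⟨(s, ⟨k - 1, by omega⟩), eq_of_lt_iff_lt (zigzag_bijective _ _) hπ.1 fun a b hab ↦ ?_⟩
    rw [Function.uncurry_apply_pair, hasLRMaxima_zigzag s _ a b hab, hs a b hab,
      Nat.sub_add_cancel hk1]
  · rintro ⟨⟨s, j⟩, rfl⟩
    have h := hasLRMaxima_zigzag s j
    have hU : ∀ c d : Fin (m + 2), 2 ≤ c.val → c < d →
        (j.val + 1 < c.val ∨ (c.val = 1 ∧ s)) → (j.val + 1 < d.val ∨ (d.val = 1 ∧ s)) := by
      rintro c d hc hcd (hjc | ⟨hc1, -⟩) <;> omega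
    exact ⟨⟨zigzag_bijective s j, h.avoids_132, h.avoids_2341 hU, h.avoids_3241 hU⟩,
      h.avoids_312⟩

theorem stmt_8 (n : ℕ) (hn : 2 ≤ n) :
    Nat.card ↥{π ∈ TSS132 n | Avoids π ![3,1,2]} = 2*n - 2 := by
  obtain ⟨m, rfl⟩ : ∃ m, n = m + 2 := ⟨n - 2, by omega⟩
  rw [setOf_tss132_avoids_312_eq_range, Nat.card_range_of_injective uncurry_zigzag_injective,
    Nat.card_eq_fintype_card, Fintype.card_prod, Fintype.card_bool, Fintype.card_fin]
  omega
end

section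
/- For all n ≥ 2, the number of permutations of {1,...,n} avoiding the patterns 132, 2341, 3241, and 321 equals 2n - 2. -/
/-! Avoiding 132 and 321 makes a permutation increasing from its third entry on: an inversion
`π i > π j` with `2 ≤ i < j` would force both `π 0` and `π 1` strictly between `π j` and `π i`,
and then `π 0, π 1, π i, π j` is an occurrence of 2341 (or `π 0, π 1, π j` one of 321). Such a
permutation is determined by its first two values; avoiding 321 forces them to be `a + 1, 0`
when they descend, and avoiding 132 forces `b, b + 1` when they ascend. Each case gives `n - 1`
permutations, all of which avoid the four patterns.
-/

section Patterns

variable {n : ℕ} {π : Fin n → Fin n}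

lemma contains_132_s12 {i j k : Fin n} (hij : i < j) (hjk : j < k) (hik : π i < π k)
    (hkj : π k < π j) : Contains π ![1, 3, 2] := by
  refine ⟨![i, j, k], by simp [hij, hjk], fun s t => ?_⟩
  fin_cases s <;> fin_cases t <;> simp <;> omega

lemma contains_321 {i j k : Fin n} (hij : i < j) (hjk : j < k) (hkj : π k < π j)
    (hji : π j < π i) : Contains π ![3, 2, 1] := by
  refine ⟨![i, j, k], by simp [hij, hjk], fun s t => ?_⟩
  fin_cases s <;> fin_cases t <;> simp <;> omega

lemma contains_2341_s12 {i j k l : Fin n} (hij : i < j) (hjk : j < k) (hkl : k < l)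
    (hli : π l < π i) (hij' : π i < π j) (hjk' : π j < π k) : Contains π ![2, 3, 4, 1] := by
  refine ⟨![i, j, k, l], by simp [hij, hjk, hkl], fun s t => ?_⟩
  fin_cases s <;> fin_cases t <;> simp <;> omega

lemma Fin.val_le_val_of_strictMono {k : ℕ} {f : Fin k → Fin n} (hf : StrictMono f) (i : Fin k) :
    (i : ℕ) ≤ f i := by
  obtain ⟨i, hi⟩ := i
  induction i with
  | zero => exact Nat.zero_le _
  | succ i ih =>
    have hlt := hf (show (⟨i, by omega⟩ : Fin k) < ⟨i + 1, hi⟩ from Nat.lt_succ_self i)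
    have := ih (by omega)
    rw [Fin.lt_def] at hlt
    simp only at this ⊢
    omega

lemma val_lt_of_strictMonoOn {K k : ℕ} (hπ : StrictMonoOn π {a | K ≤ (a : ℕ)})
    {f : Fin k → Fin n} (hf : StrictMono f) {i j : Fin k} (hij : i < j)
    (hinv : π (f j) < π (f i)) : (f i : ℕ) < K := by
  by_contra! hK
  exact (hπ hK (hK.trans (hf hij).le) (hf hij)).not_gt hinv

lemma avoids_of_strictMonoOn {K k : ℕ} (hπ : StrictMonoOn π {a | K ≤ (a : ℕ)})
    {p : Fin k → ℕ} {i j : Fin k} (hij : i < j) (hK : K ≤ i) (hp : p j < p i) :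
    Avoids π p := by
  rintro ⟨f, hf, hrel⟩
  have := val_lt_of_strictMonoOn hπ hf hij ((hrel j i).mp hp)
  have := Fin.val_le_val_of_strictMono hf i
  omega

lemma apply_between_of_avoids (hπ : π.Injective) (h132 : Avoids π ![1, 3, 2])
    (h321 : Avoids π ![3, 2, 1]) {w i j : Fin n} (hwi : w < i) (hij : i < j)
    (hji : π j < π i) : π j < π w ∧ π w < π i := by
  refine ⟨lt_of_not_ge fun hwj => h132 ?_, lt_of_not_ge fun hiw => h321 ?_⟩
  · exact contains_132_s12 hwi hij (lt_of_le_of_ne hwj (hπ.ne (hwi.trans hij).ne)) hji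
  · exact contains_321 hwi hij hji (lt_of_le_of_ne hiw (hπ.ne hwi.ne'))

end Patterns

lemma eq_of_eqOn_compl_of_strictMonoOn {α β : Type*} [LinearOrder α] [WellFoundedLT α]
    [Preorder β] {π σ : α → β} {s : Set α} (hπ : π.Bijective) (hσ : σ.Bijective)
    (hπs : StrictMonoOn π s) (hσs : StrictMonoOn σ s) (h : Set.EqOn π σ sᶜ) : π = σ := by
  have himage : π '' s = σ '' s := by
    rw [← compl_compl (π '' s), ← Set.image_compl_eq hπ, h.image_eq, Set.image_compl_eq hσ,
      compl_compl]
  have hrestrict : s.domRestrict π = s.domRestrict σ := by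
    rw [← hπs.domRestrict.range_inj hσs.domRestrict, Set.range_domRestrict,
      Set.range_domRestrict, himage]
  funext a
  by_cases ha : a ∈ s
  · exact congrFun hrestrict ⟨a, ha⟩
  · exact h ha

section HeadPairs

variable {m : ℕ} {π : Fin (m + 2) → Fin (m + 2)}

lemma eqOn_of_apply_zero_of_apply_one {α : Type*} {f g : Fin (m + 2) → α} (h0 : f 0 = g 0)
    (h1 : f 1 = g 1) : Set.EqOn f g {a | 2 ≤ (a : ℕ)}ᶜ := by
  intro a ha
  obtain rfl | rfl : a = 0 ∨ a = 1 := by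
    simp only [Set.mem_compl_iff, Set.mem_ofPred_eq, not_le] at ha
    simp only [Fin.ext_iff, Fin.val_zero, Fin.val_one]
    omega
  exacts [h0, h1]

lemma Fin.one_lt_of_ne_zero_of_ne_one {a : Fin (m + 2)} (h0 : a ≠ 0) (h1 : a ≠ 1) : 1 < a := by
  simp only [ne_eq, Fin.ext_iff, Fin.lt_def, Fin.val_zero, Fin.val_one] at *
  omega

lemma avoids_of_apply_one_eq_succ (hπ : π.Injective)
    (hmono : StrictMonoOn π {a | 2 ≤ (a : ℕ)}) (h01 : (π 1 : ℕ) = π 0 + 1) {p : Fin 3 → ℕ}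
    (hp : p 2 < p 1) (hp0 : p 0 < p 1 ↔ p 0 < p 2) : Avoids π p := by
  rintro ⟨f, hf, hrel⟩
  have hinv := (hrel 2 1).mp hp
  have hf1 := val_lt_of_strictMonoOn hmono hf (i := 1) (j := 2) (by decide) hinv
  have hf01 := hf (show (0 : Fin 3) < 1 by decide)
  obtain ⟨hf0, hf1⟩ : f 0 = 0 ∧ f 1 = 1 := by
    simp only [Fin.lt_def, Fin.ext_iff, Fin.val_zero, Fin.val_one] at hf01 ⊢
    omega
  have hne : π (f 2) ≠ π 0 := hπ.ne (hf0 ▸ (hf (show (0 : Fin 3) < 2 by decide)).ne')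
  rw [hrel, hrel, hf0, hf1] at hp0
  rw [hf1] at hinv
  simp only [Fin.lt_def, ne_eq, Fin.ext_iff] at hp0 hinv hne
  omega

lemma strictMonoOn_of_avoids (hπ : π.Injective) (h132 : Avoids π ![1, 3, 2])
    (h321 : Avoids π ![3, 2, 1]) (h2341 : Avoids π ![2, 3, 4, 1]) :
    StrictMonoOn π {a | 2 ≤ (a : ℕ)} := by
  intro i hi j _ hij
  by_contra! hji'
  have hji : π j < π i := lt_of_le_of_ne hji' (hπ.ne hij.ne')
  have h1i : (1 : Fin (m + 2)) < i := by
    simp only [Set.mem_ofPred_eq] at hi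
    simp only [Fin.lt_def, Fin.val_one]
    omega
  obtain ⟨hj0, h0i⟩ := apply_between_of_avoids hπ h132 h321 (Fin.zero_lt_one.trans h1i) hij hji
  obtain ⟨hj1, h1i'⟩ := apply_between_of_avoids hπ h132 h321 h1i hij hji
  have h01 : π 0 < π 1 := lt_of_not_ge fun h10 =>
    h321 (contains_321 Fin.zero_lt_one (h1i.trans hij) hj1 (lt_of_le_of_ne h10 (hπ.ne (by simp))))
  exact h2341 (contains_2341_s12 Fin.zero_lt_one h1i hij hj0 h01 h1i')

lemma apply_one_eq_zero_of_avoids (hπ : π.Bijective) (h321 : Avoids π ![3, 2, 1])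
    (h10 : π 1 < π 0) : π 1 = 0 := by
  by_contra h
  rw [Fin.ext_iff, Fin.val_zero] at h
  obtain ⟨j, hj⟩ := hπ.2 ⟨(π 1 : ℕ) - 1, by omega⟩
  have hj1 : π j < π 1 := by simp only [hj, Fin.lt_def]; omega
  have h1j : 1 < j := Fin.one_lt_of_ne_zero_of_ne_one (by rintro rfl; exact (hj1.trans h10).false)
    (by rintro rfl; exact hj1.false)
  exact h321 (contains_321 Fin.zero_lt_one h1j hj1 h10)

lemma apply_one_eq_succ_of_avoids (hπ : π.Bijective) (h132 : Avoids π ![1, 3, 2])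
    (h01 : π 0 < π 1) : (π 1 : ℕ) = π 0 + 1 := by
  by_contra h
  obtain ⟨j, hj⟩ := hπ.2 ⟨(π 0 : ℕ) + 1, by omega⟩
  have h0j : π 0 < π j := by simp only [hj, Fin.lt_def]; omega
  have hj1 : π j < π 1 := by simp only [hj, Fin.lt_def]; omega
  have h1j : 1 < j := Fin.one_lt_of_ne_zero_of_ne_one (by rintro rfl; exact h0j.false)
    (by rintro rfl; exact hj1.false)
  exact h132 (contains_132_s12 Fin.zero_lt_one h1j h0j hj1)

end HeadPairs

section Construction

variable {m : ℕ}

/-- In one-line notation: `(a+1) 0 1 ⋯ a (a+2) ⋯ (m+1)`. -/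
def headDescent (a : Fin (m + 1)) (i : Fin (m + 2)) : Fin (m + 2) :=
  ⟨if (i : ℕ) = 0 then a + 1 else if (i : ℕ) ≤ a + 1 then i - 1 else i, by split_ifs <;> omega⟩

/-- In one-line notation: `b (b+1) 0 1 ⋯ (b-1) (b+2) ⋯ (m+1)`. -/
def headAscent (b : Fin (m + 1)) (i : Fin (m + 2)) : Fin (m + 2) :=
  ⟨if (i : ℕ) = 0 then b else if (i : ℕ) = 1 then b + 1 else if (i : ℕ) ≤ b + 1 then i - 2 else i,
    by split_ifs <;> omega⟩

@[simp] lemma headDescent_apply_zero (a : Fin (m + 1)) : (headDescent a 0 : ℕ) = a + 1 := rfl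

@[simp] lemma headDescent_apply_one (a : Fin (m + 1)) : headDescent a 1 = 0 := by
  simp [headDescent]

@[simp] lemma headAscent_apply_zero (b : Fin (m + 1)) : (headAscent b 0 : ℕ) = b := rfl

@[simp] lemma headAscent_apply_one (b : Fin (m + 1)) : (headAscent b 1 : ℕ) = b + 1 := by
  simp [headAscent]

lemma headDescent_bijective (a : Fin (m + 1)) : (headDescent a).Bijective := by
  refine Finite.injective_iff_bijective.mp fun i j hij => ?_
  simp only [headDescent, Fin.ext_iff] at hij ⊢
  split_ifs at hij <;> omega

lemma headAscent_bijective (b : Fin (m + 1)) : (headAscent b).Bijective := by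
  refine Finite.injective_iff_bijective.mp fun i j hij => ?_
  simp only [headAscent, Fin.ext_iff] at hij ⊢
  split_ifs at hij <;> omega

lemma strictMonoOn_headDescent (a : Fin (m + 1)) :
    StrictMonoOn (headDescent a) {i | 1 ≤ (i : ℕ)} := by
  intro i hi j _ hij
  simp only [Set.mem_ofPred_eq] at hi
  simp only [headDescent, Fin.lt_def] at hij ⊢
  split_ifs <;> omega

lemma strictMonoOn_headAscent (b : Fin (m + 1)) :
    StrictMonoOn (headAscent b) {i | 2 ≤ (i : ℕ)} := by
  intro i hi j _ hij
  simp only [Set.mem_ofPred_eq] at hi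
  simp only [headAscent, Fin.lt_def] at hij ⊢
  split_ifs <;> omega

lemma headDescent_mem (a : Fin (m + 1)) :
    headDescent a ∈ {π ∈ TSS132 (m + 2) | Avoids π ![3, 2, 1]} := by
  have h := strictMonoOn_headDescent a
  refine ⟨⟨headDescent_bijective a, ?_, ?_, ?_⟩, ?_⟩
  · exact avoids_of_strictMonoOn h (i := 1) (j := 2) (by decide) le_rfl (by decide)
  · exact avoids_of_strictMonoOn h (i := 2) (j := 3) (by decide) (by decide) (by decide)
  · exact avoids_of_strictMonoOn h (i := 2) (j := 3) (by decide) (by decide) (by decide)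
  · exact avoids_of_strictMonoOn h (i := 1) (j := 2) (by decide) le_rfl (by decide)


lemma headAscent_mem (b : Fin (m + 1)) :
    headAscent b ∈ {π ∈ TSS132 (m + 2) | Avoids π ![3, 2, 1]} := by
  have h := strictMonoOn_headAscent b
  have h01 : (headAscent b 1 : ℕ) = headAscent b 0 + 1 := by simp
  have hinj := (headAscent_bijective b).1
  refine ⟨⟨headAscent_bijective b, ?_, ?_, ?_⟩, ?_⟩
  · exact avoids_of_apply_one_eq_succ hinj h h01 (by decide) (by decide)
  · exact avoids_of_strictMonoOn h (i := 2) (j := 3) (by decide) le_rfl (by decide)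
  · exact avoids_of_strictMonoOn h (i := 2) (j := 3) (by decide) le_rfl (by decide)
  · exact avoids_of_apply_one_eq_succ hinj h h01 (by decide) (by decide)

lemma injective_sumElim_headDescent_headAscent :
    (Sum.elim (headDescent (m := m)) headAscent).Injective := by
  refine Function.Injective.sumElim (fun a a' h => ?_) (fun b b' h => ?_) fun a b h => ?_
  · simpa [Fin.ext_iff] using congrArg (fun π => (π 0 : ℕ)) h
  · simpa [Fin.ext_iff] using congrArg (fun π => (π 0 : ℕ)) h
  · simpa using congrArg (fun π => (π 1 : ℕ)) h

lemma range_sumElim_headDescent_headAscent :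
    Set.range (Sum.elim (headDescent (m := m)) headAscent) =
      {π ∈ TSS132 (m + 2) | Avoids π ![3, 2, 1]} := by
  refine subset_antisymm ?_ fun π hπ => ?_
  · rintro _ ⟨a | b, rfl⟩
    exacts [headDescent_mem a, headAscent_mem b]
  obtain ⟨⟨hb, h132, h2341, -⟩, h321⟩ := hπ
  have hmono := strictMonoOn_of_avoids hb.1 h132 h321 h2341
  rcases lt_or_gt_of_ne (hb.1.ne zero_ne_one) with h01 | h10
  · have h1 := apply_one_eq_succ_of_avoids hb h132 h01
    refine ⟨.inr ⟨π 0, by omega⟩, eq_of_eqOn_compl_of_strictMonoOn (headAscent_bijective _) hb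
      (strictMonoOn_headAscent _) hmono (eqOn_of_apply_zero_of_apply_one ?_ ?_)⟩
    · ext; simp
    · ext; simp [h1]
  · have h1 := apply_one_eq_zero_of_avoids hb h321 h10
    have h0 : 0 < (π 0 : ℕ) := by rw [h1] at h10; exact h10
    refine ⟨.inl ⟨π 0 - 1, by omega⟩, eq_of_eqOn_compl_of_strictMonoOn (headDescent_bijective _) hb
      ((strictMonoOn_headDescent _).mono fun i (hi : 2 ≤ (i : ℕ)) => one_le_two.trans hi) hmono
      (eqOn_of_apply_zero_of_apply_one ?_ ?_)⟩
    · ext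
      simp only [Sum.elim_inl, headDescent_apply_zero]
      omega
    · simp [h1]

end Construction

theorem stmt_12 (n : ℕ) (hn : 2 ≤ n) :
    Nat.card ↥{π ∈ TSS132 n | Avoids π ![3,2,1]} = 2*n - 2 := by
  obtain ⟨m, rfl⟩ : ∃ m, n = m + 2 := ⟨n - 2, by omega⟩
  rw [← range_sumElim_headDescent_headAscent,
    Nat.card_range_of_injective injective_sumElim_headDescent_headAscent, Nat.card_sum,
    Nat.card_eq_fintype_card, Fintype.card_fin]
  omega
end
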